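/- arXiv:1505.00478 — 3 statements merged into one kernel-verified Lean document; each statement's English description precedes it below -/
import Mathlib

section
/- All states of a (bottom-up) tree automaton A = (Q, Σ, F, δ) are reachable if and only if there exists a total well-founded order < on Q such that for every state q ∈ Q there exist a function symbol f ∈ Σ of arity n and states q₁ < q, q₂ < q, …, qₙ < q with f(q₁,…,qₙ) ⇝ q a transition in δ. -/
/-- Terms over a ranked signature `F` (with arity `ar`) and variables `V`.
States of a tree automaton are treated as extra constants, i.e. variables. -/
inductive Tm (F : Type) (ar : F → ℕ) (V : Type) : Type
  | var : V → Tm F ar V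
  | node : (f : F) → (Fin (ar f) → Tm F ar V) → Tm F ar V

namespace Tm

variable {F : Type} {ar : F → ℕ}

/-- Substitution. -/
def subst {V W : Type} (σ : V → Tm F ar W) : Tm F ar V → Tm F ar W
  | var x => σ x
  | node f ts => node f (fun i => (ts i).subst σ)

/-- The list of variable occurrences of a term. -/
def varsList {V : Type} : Tm F ar V → List V
  | var x => [x]
  | node f ts => (List.ofFn (fun i => (ts i).varsList)).flatten

/-- A term is linear if every variable occurs at most once. -/
def Linear {V : Type} (t : Tm F ar V) : Prop := t.varsList.Nodup

/-- Subterm relation. -/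
inductive Subtm {V : Type} : Tm F ar V → Tm F ar V → Prop
  | refl (t : Tm F ar V) : Subtm t t
  | child {s : Tm F ar V} {f : F} {ts : Fin (ar f) → Tm F ar V} (i : Fin (ar f)) :
      Subtm s (ts i) → Subtm s (node f ts)

end Tm

/-- Ground terms: terms without variables. -/
abbrev GTm (F : Type) (ar : F → ℕ) : Type := Tm F ar Empty

/-- A ground term viewed as a term over any variable type. -/
def GTm.toTm {F : Type} {ar : F → ℕ} {V : Type} (t : GTm F ar) : Tm F ar V :=
  t.subst (fun e => e.elim)

/-- A (bottom-up, possibly non-deterministic) tree automaton: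
final states and a transition relation `δ`. -/
structure Automaton (F : Type) (ar : F → ℕ) (Q : Type) where
  final : Set Q
  delta : (f : F) → (Fin (ar f) → Q) → Q → Prop

namespace Automaton

variable {F : Type} {ar : F → ℕ} {Q Q' : Type}

/-- One rewrite step `⇝` induced by an automaton on terms over `Σ ∪ Q`. -/
inductive Step (A : Automaton F ar Q) : Tm F ar Q → Tm F ar Q → Prop
  | base {f : F} {qs : Fin (ar f) → Q} {q : Q} :
      A.delta f qs q → Step A (.node f (fun i => .var (qs i))) (.var q)
  | congr {f : F} {ts : Fin (ar f) → Tm F ar Q} {i : Fin (ar f)} {t' : Tm F ar Q} :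
      Step A (ts i) t' → Step A (.node f ts) (.node f (Function.update ts i t'))

/-- The reduction relation `⇝*`. -/
def Steps (A : Automaton F ar Q) : Tm F ar Q → Tm F ar Q → Prop :=
  Relation.ReflTransGen (Step A)

/-- A state is reachable if some ground term reduces to it. -/
def Reachable (A : Automaton F ar Q) (q : Q) : Prop :=
  ∃ t : GTm F ar, A.Steps t.toTm (.var q)

/-- The language of the automaton. -/
def Lang (A : Automaton F ar Q) : Set (GTm F ar) :=
  {t | ∃ q ∈ A.final, A.Steps t.toTm (.var q)}

/-- The product automaton. -/
def prod (A : Automaton F ar Q) (B : Automaton F ar Q') : Automaton F ar (Q × Q') where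
  final := A.final ×ˢ B.final
  delta f qs q := A.delta f (fun i => (qs i).1) q.1 ∧ B.delta f (fun i => (qs i).2) q.2

/-- Determinism. -/
def Deterministic (A : Automaton F ar Q) : Prop :=
  ∀ (f : F) (qs : Fin (ar f) → Q) (q q' : Q), A.delta f qs q → A.delta f qs q' → q = q'

/-- Completeness. -/
def Complete (A : Automaton F ar Q) : Prop :=
  ∀ (f : F) (qs : Fin (ar f) → Q), ∃ q : Q, A.delta f qs q

end Automaton

/-- A term rewriting system: a set of rules over variables `X`. -/
abbrev TRS (F : Type) (ar : F → ℕ) (X : Type) : Type := Set (Tm F ar X × Tm F ar X)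

/-- A TRS is left-linear if no variable occurs twice in a left-hand side. -/
def LeftLinear {F : Type} {ar : F → ℕ} {X : Type} (R : TRS F ar X) : Prop :=
  ∀ p ∈ R, p.1.Linear

/-- One rewrite step `→_R` (on terms over any variable type `V`). -/
inductive RStep {F : Type} {ar : F → ℕ} {X V : Type} (R : TRS F ar X) :
    Tm F ar V → Tm F ar V → Prop
  | base {l r : Tm F ar X} {σ : X → Tm F ar V} :
      (l, r) ∈ R → RStep R (l.subst σ) (r.subst σ)
  | congr {f : F} {ts : Fin (ar f) → Tm F ar V} {i : Fin (ar f)} {t' : Tm F ar V} :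
      RStep R (ts i) t' → RStep R (.node f ts) (.node f (Function.update ts i t'))

/-- `t` is an `R`-normal form. -/
def IsNF {F : Type} {ar : F → ℕ} {X V : Type} (R : TRS F ar X) (t : Tm F ar V) : Prop :=
  ∀ t', ¬ RStep R t t'

/-!
If every state is reachable, order the states by the least size of a ground term reaching them
(breaking ties by an arbitrary well-order). The last transition of a smallest term reaching `q`
comes from states reached by its proper subterms, which are smaller. Conversely, given such an
order, well-founded induction builds for each `q` a ground term `f(t₁, …, tₙ)` from terms `tᵢ`
reaching the smaller source states.
-/

theorem exists_isWellOrder_extending_onFun {α β : Type*} (s : β → β → Prop) [IsWellOrder β s]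
    (m : α → β) : ∃ r : α → α → Prop, IsWellOrder α r ∧ ∀ a b, s (m a) (m b) → r a b :=
  ⟨(Prod.Lex s WellOrderingRel).onFun fun a => (m a, a),
    Function.Injective.isWellOrder _ fun _ _ h => (Prod.ext_iff.1 h).2,
    fun _ _ h => Prod.Lex.left _ _ h⟩

namespace Tm

variable {F : Type} {ar : F → ℕ} {V : Type}

def size : Tm F ar V → ℕ
  | var _ => 1
  | node _ ts => 1 + ∑ i, (ts i).size

lemma size_lt_size_node {f : F} (ts : Fin (ar f) → Tm F ar V) (i : Fin (ar f)) :
    (ts i).size < (node f ts).size := by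
  have := Finset.single_le_sum (f := fun j => (ts j).size) (fun _ _ => Nat.zero_le _)
    (Finset.mem_univ i)
  show _ < 1 + _
  omega

end Tm

namespace Automaton

variable {F : Type} {ar : F → ℕ} {Q : Type} {A : Automaton F ar Q}

lemma Step.node_update {f : F} {ts : Fin (ar f) → Tm F ar Q} {i : Fin (ar f)}
    {t t' : Tm F ar Q} (h : A.Step t t') :
    A.Step (.node f (Function.update ts i t)) (.node f (Function.update ts i t')) := by
  simpa using Step.congr (ts := Function.update ts i t) (i := i) (by simpa using h)

lemma Steps.node_update {f : F} {ts : Fin (ar f) → Tm F ar Q} {i : Fin (ar f)}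
    {t t' : Tm F ar Q} (h : A.Steps t t') :
    A.Steps (.node f (Function.update ts i t)) (.node f (Function.update ts i t')) :=
  Relation.ReflTransGen.lift (fun s => Tm.node f (Function.update ts i s))
    (fun _ _ => Step.node_update) _ _ h

lemma Steps.node {f : F} {us vs : Fin (ar f) → Tm F ar Q} (h : ∀ i, A.Steps (us i) (vs i)) :
    A.Steps (.node f us) (.node f vs) := by
  classical
  suffices ∀ s : Finset (Fin (ar f)), A.Steps (.node f us) (.node f (s.piecewise vs us)) by
    simpa using this Finset.univ
  intro s
  induction s using Finset.induction_on with
  | empty =>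
    rw [Finset.piecewise_empty]
    exact .refl
  | insert j s hj ih =>
    have hus : Function.update (s.piecewise vs us) j (us j) = s.piecewise vs us :=
      Function.update_eq_self_iff.2 (s.piecewise_eq_of_notMem vs us hj).symm
    have hstep := Steps.node_update (f := f) (ts := s.piecewise vs us) (i := j) (h j)
    rw [hus] at hstep
    rw [Finset.piecewise_insert]
    exact ih.trans hstep

lemma Steps.eq_var {p : Q} {t : Tm F ar Q} (h : A.Steps (.var p) t) : t = .var p := by
  induction h with
  | refl => rfl
  | tail _ hs ih => subst ih; cases hs

lemma Steps.exists_delta_of_node {f : F} {ts : Fin (ar f) → Tm F ar Q} {q : Q}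
    (h : A.Steps (.node f ts) (.var q)) :
    ∃ qs, A.delta f qs q ∧ ∀ i, A.Steps (ts i) (.var (qs i)) := by
  generalize ht : Tm.node f ts = t at h
  induction h using Relation.ReflTransGen.head_induction_on generalizing ts with
  | refl => cases ht
  | head hstep hrest ih =>
    subst ht
    cases hstep with
    | base hd =>
      cases Steps.eq_var hrest
      exact ⟨_, hd, fun _ => .refl⟩
    | @congr _ _ i _ hi =>
      obtain ⟨qs, hd, hqs⟩ := ih rfl
      refine ⟨qs, hd, fun j => ?_⟩
      rcases eq_or_ne j i with rfl | hne
      · have hqsi := hqs j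
        rw [Function.update_self] at hqsi
        exact .head hi hqsi
      · simpa [Function.update_of_ne hne] using hqs j

lemma reachable_of_delta {f : F} {qs : Fin (ar f) → Q} {q : Q} (hd : A.delta f qs q)
    (h : ∀ i, A.Reachable (qs i)) : A.Reachable q := by
  choose ts hts using h
  exact ⟨.node f ts, (Steps.node hts).tail (.base hd)⟩

lemma reachable_of_wellFounded {r : Q → Q → Prop} (hr : WellFounded r)
    (h : ∀ q, ∃ (f : F) (qs : Fin (ar f) → Q), (∀ i, r (qs i) q) ∧ A.delta f qs q) (q : Q) :
    A.Reachable q := by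
  induction q using hr.induction with
  | _ q ih =>
    obtain ⟨f, qs, hlt, hd⟩ := h q
    exact reachable_of_delta hd fun i => ih _ (hlt i)

noncomputable def minSize (A : Automaton F ar Q) (q : Q) : ℕ :=
  sInf (Tm.size '' {t : GTm F ar | A.Steps t.toTm (.var q)})

lemma minSize_le {t : GTm F ar} {q : Q} (h : A.Steps t.toTm (.var q)) :
    A.minSize q ≤ t.size :=
  Nat.sInf_le ⟨t, h, rfl⟩

lemma exists_delta_minSize_lt {q : Q} (h : A.Reachable q) :
    ∃ (f : F) (qs : Fin (ar f) → Q), (∀ i, A.minSize (qs i) < A.minSize q) ∧ A.delta f qs q := by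
  obtain ⟨t, ht, hsize⟩ := Nat.sInf_mem (Set.Nonempty.image Tm.size h)
  cases t with
  | var e => exact e.elim
  | node f ts =>
    obtain ⟨qs, hd, hqs⟩ := Steps.exists_delta_of_node (ts := fun i => GTm.toTm (ts i)) ht
    exact ⟨f, qs, fun i => (minSize_le (hqs i)).trans_lt
      ((Tm.size_lt_size_node ts i).trans_eq hsize), hd⟩

end Automaton

theorem all_states_reachable_iff_order_general {F : Type} {ar : F → ℕ} {Q : Type}
    (A : Automaton F ar Q) :
    (∀ q : Q, A.Reachable q) ↔
      ∃ r : Q → Q → Prop, IsWellOrder Q r ∧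
        ∀ q : Q, ∃ (f : F) (qs : Fin (ar f) → Q),
          (∀ i, r (qs i) q) ∧ A.delta f qs q := by
  constructor
  · intro h
    obtain ⟨r, hr, hmono⟩ := exists_isWellOrder_extending_onFun (β := ℕ) (· < ·) A.minSize
    refine ⟨r, hr, fun q => ?_⟩
    obtain ⟨f, qs, hlt, hd⟩ := Automaton.exists_delta_minSize_lt (h q)
    exact ⟨f, qs, fun i => hmono _ _ (hlt i), hd⟩
  · rintro ⟨r, hr, h⟩
    exact Automaton.reachable_of_wellFounded hr.wf h

/-- All states are reachable iff there is a total well-founded order `<` on `Q` such that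
every state has an incoming transition from strictly smaller states. -/
theorem all_states_reachable_iff_order {F : Type} {ar : F → ℕ} {Q : Type} [Finite Q]
    (A : Automaton F ar Q) :
    (∀ q : Q, A.Reachable q) ↔
      ∃ r : Q → Q → Prop, IsWellOrder Q r ∧
        ∀ q : Q, ∃ (f : F) (qs : Fin (ar f) → Q),
          (∀ i, r (qs i) q) ∧ A.delta f qs q :=
  all_states_reachable_iff_order_general A
end

section
/- Let A = (Q, Σ, F, δ) be a tree automaton and R a left-linear term rewriting system. Suppose for every rule ℓ → r ∈ R, every α : X → Q, and every q ∈ Q with ℓα ⇝* q, there exists a term t with ℓ →_R⁺ t and tα ⇝* q. Then L(A) is weakly closed under rewriting with respect to R: every term s ∈ L(A) that is not an R-normal form has a reduct s →_R⁺ s' with s' ∈ L(A). -/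
/-!
At a redex at the root, `s = ℓσ` with `ℓ` linear, so an accepting run on `ℓσ` splits into runs
`σ x ⇝* α x` on the substituted subterms and a run `ℓα ⇝* q`; the hypothesis turns the latter into
`tα ⇝* q` for a reduct `t` of `ℓ`, and then `ℓσ →⁺ tσ ⇝* tα ⇝* q`. Variables of `t` that do not
occur in `ℓ` are instantiated by a ground term reaching some state, e.g. `s` itself.
A redex below the root is handled by induction, since runs decompose along the term structure.
-/

open Relation

section

variable {F : Type} {ar : F → ℕ} {Q X : Type}

namespace Tm

theorem subst_subst {V W U : Type} (σ : V → Tm F ar W) (τ : W → Tm F ar U) (t : Tm F ar V) :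
    (t.subst σ).subst τ = t.subst (fun x => (σ x).subst τ) := by
  induction t with
  | var x => rfl
  | node g ts ih => exact congrArg _ (funext ih)

theorem mem_varsList_node {V : Type} {g : F} {ts : Fin (ar g) → Tm F ar V} {x : V} :
    x ∈ (node g ts).varsList ↔ ∃ i, x ∈ (ts i).varsList := by
  simp [varsList, List.mem_flatten, List.mem_ofFn]

theorem subst_congr {V W : Type} {σ τ : V → Tm F ar W} (t : Tm F ar V)
    (h : ∀ x ∈ t.varsList, σ x = τ x) : t.subst σ = t.subst τ := by
  induction t with
  | var x => exact h x (List.mem_singleton_self x)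
  | node g ts ih =>
    exact congrArg _ (funext fun i => ih i fun x hx => h x (mem_varsList_node.2 ⟨i, hx⟩))

namespace Linear

variable {V : Type} {g : F} {ts : Fin (ar g) → Tm F ar V}

theorem child (h : Linear (node g ts)) (i : Fin (ar g)) : Linear (ts i) := by
  rw [Linear, varsList, List.nodup_flatten] at h
  exact h.1 _ (List.mem_ofFn.mpr ⟨i, rfl⟩)

theorem eq_of_mem_varsList (h : Linear (node g ts)) {x : V} {i j : Fin (ar g)}
    (hi : x ∈ (ts i).varsList) (hj : x ∈ (ts j).varsList) : i = j := by
  rw [Linear, varsList, List.nodup_flatten, List.pairwise_ofFn] at h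
  by_contra hne
  rcases lt_or_gt_of_ne hne with hlt | hlt
  · exact h.2 hlt hi hj
  · exact h.2 hlt hj hi

theorem exists_agree_children {W : Type} [Nonempty W] (h : Linear (node g ts))
    (β : Fin (ar g) → V → W) : ∃ α : V → W, ∀ i, ∀ x ∈ (ts i).varsList, α x = β i x := by
  classical
  refine ⟨fun x => if hx : ∃ i, x ∈ (ts i).varsList then β hx.choose x
    else Classical.arbitrary W, fun i x hx => ?_⟩
  have hex : ∃ i, x ∈ (ts i).varsList := ⟨i, hx⟩
  simp only [dif_pos hex, h.eq_of_mem_varsList hex.choose_spec hx]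

end Linear

section Congruence

variable {V : Type} {r : Tm F ar V → Tm F ar V → Prop}
  (hr : ∀ {g : F} {ts : Fin (ar g) → Tm F ar V} {i : Fin (ar g)} {t' : Tm F ar V},
    r (ts i) t' → r (node g ts) (node g (Function.update ts i t')))
include hr

theorem reflTransGen_node_update {g : F} {ts : Fin (ar g) → Tm F ar V} {i : Fin (ar g)}
    {t' : Tm F ar V} (h : ReflTransGen r (ts i) t') :
    ReflTransGen r (node g ts) (node g (Function.update ts i t')) := by
  have hlift := ReflTransGen.lift (p := r) (fun t => node g (Function.update ts i t))
    (fun a b hab => by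
      have hab' := hr (ts := Function.update ts i a) (i := i) (by rwa [Function.update_self])
      rwa [Function.update_idem] at hab') _ _ h
  simpa only [Function.onFun, Function.update_eq_self] using hlift

theorem transGen_node_update {g : F} {ts : Fin (ar g) → Tm F ar V} {i : Fin (ar g)}
    {t' : Tm F ar V} (h : TransGen r (ts i) t') :
    TransGen r (node g ts) (node g (Function.update ts i t')) := by
  have hlift := TransGen.lift (p := r) (fun t => node g (Function.update ts i t))
    (fun a b hab => by
      have hab' := hr (ts := Function.update ts i a) (i := i) (by rwa [Function.update_self])
      rwa [Function.update_idem] at hab') _ _ h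
  simpa only [Function.onFun, Function.update_eq_self] using hlift

theorem reflTransGen_node {g : F} {ts us : Fin (ar g) → Tm F ar V}
    (h : ∀ i, ReflTransGen r (ts i) (us i)) : ReflTransGen r (node g ts) (node g us) := by
  classical
  suffices ∀ S : Finset (Fin (ar g)), ReflTransGen r (node g ts) (node g (S.piecewise us ts)) by
    simpa only [Finset.piecewise_univ] using this Finset.univ
  intro S
  induction S using Finset.induction_on with
  | empty => simp only [Finset.piecewise_empty, ReflTransGen.refl]
  | insert a S ha ih =>
    rw [Finset.piecewise_insert]
    refine ih.trans (reflTransGen_node_update hr ?_)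
    rw [Finset.piecewise_eq_of_notMem _ _ _ ha]
    exact h a

theorem reflTransGen_subst {W : Type} {σ τ : W → Tm F ar V} (h : ∀ x, ReflTransGen r (σ x) (τ x))
    (t : Tm F ar W) : ReflTransGen r (t.subst σ) (t.subst τ) := by
  induction t with
  | var x => exact h x
  | node g ts ih => exact reflTransGen_node hr ih

end Congruence

end Tm

theorem GTm.toTm_node {V : Type} {g : F} (ts : Fin (ar g) → GTm F ar) :
    (GTm.toTm (.node g ts) : Tm F ar V) = .node g (fun i => (ts i).toTm) :=
  rfl

theorem GTm.toTm_subst {V : Type} (t : Tm F ar X) (σ : X → GTm F ar) :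
    (GTm.toTm (t.subst σ) : Tm F ar V) = t.subst (fun x => (σ x).toTm) :=
  Tm.subst_subst _ _ t

theorem RStep.subst {V W : Type} {R : TRS F ar X} {u v : Tm F ar V} (h : RStep R u v)
    (σ : V → Tm F ar W) : RStep R (u.subst σ) (v.subst σ) := by
  induction h with
  | base hmem =>
    rw [Tm.subst_subst, Tm.subst_subst]
    exact RStep.base hmem
  | @congr g ts i t' _ ih =>
    have hcomm : (Tm.subst σ ∘ Function.update ts i t') =
        Function.update (Tm.subst σ ∘ ts) i (t'.subst σ) :=
      Function.comp_update _ _ _ _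
    simpa only [Tm.subst, ← Function.comp_def, hcomm] using RStep.congr (ts := Tm.subst σ ∘ ts) ih

theorem RStep.transGen_subst {V W : Type} {R : TRS F ar X} {u v : Tm F ar V}
    (h : TransGen (RStep R) u v) (σ : V → Tm F ar W) :
    TransGen (RStep R) (u.subst σ) (v.subst σ) :=
  TransGen.lift (Tm.subst σ) (fun _ _ hab => hab.subst σ) _ _ h

namespace Automaton

variable {A : Automaton F ar Q}

theorem steps_var_eq {q q' : Q} (h : A.Steps (.var q) (.var q')) : q = q' := by
  rcases h.cases_head with h | ⟨_, hstep, _⟩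
  · exact Tm.var.inj h
  · cases hstep

theorem steps_node_var_iff {g : F} {ts : Fin (ar g) → Tm F ar Q} {q : Q} :
    A.Steps (.node g ts) (.var q) ↔
      ∃ qs : Fin (ar g) → Q, (∀ i, A.Steps (ts i) (.var (qs i))) ∧ A.delta g qs q := by
  constructor
  · intro h
    generalize hu : (Tm.node g ts : Tm F ar Q) = u at h
    induction h using ReflTransGen.head_induction_on generalizing ts with
    | refl => cases hu
    | head hstep hsteps ih =>
      subst hu
      cases hstep with
      | base hδ =>
        cases steps_var_eq hsteps
        exact ⟨_, fun _ => ReflTransGen.refl, hδ⟩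
      | @congr _ _ i _ hchild =>
        obtain ⟨qs, hqs, hδ⟩ := ih rfl
        refine ⟨qs, fun j => ?_, hδ⟩
        rcases eq_or_ne j i with rfl | hji
        · have hj := hqs j
          rw [Function.update_self] at hj
          exact .head hchild hj
        · simpa [hji] using hqs j
  · rintro ⟨qs, hqs, hδ⟩
    exact (Tm.reflTransGen_node Step.congr hqs).tail (Step.base hδ)

theorem exists_states_of_steps_subst {ℓ : Tm F ar X} (hℓ : ℓ.Linear) {σ : X → Tm F ar Q} {q : Q}
    (h : A.Steps (ℓ.subst σ) (.var q)) :
    ∃ α : X → Q, (∀ x ∈ ℓ.varsList, A.Steps (σ x) (.var (α x))) ∧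
      A.Steps (ℓ.subst (fun x => .var (α x))) (.var q) := by
  induction ℓ generalizing q with
  | var x =>
    refine ⟨fun _ => q, fun y hy => ?_, ReflTransGen.refl⟩
    rw [List.mem_singleton.1 hy]
    exact h
  | node g ls ih =>
    obtain ⟨qs, hqs, hδ⟩ := steps_node_var_iff.1 h
    choose β hβσ hβ using fun i => ih i (hℓ.child i) (hqs i)
    have hQ : Nonempty Q := ⟨q⟩
    obtain ⟨α, hα⟩ := hℓ.exists_agree_children β
    refine ⟨α, fun x hx => ?_, steps_node_var_iff.2 ⟨qs, fun i => ?_, hδ⟩⟩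
    · obtain ⟨i, hi⟩ := Tm.mem_varsList_node.1 hx
      rw [hα i x hi]
      exact hβσ i x hi
    · rw [Tm.subst_congr (ls i) fun x hx => congrArg Tm.var (hα i x hx)]
      exact hβ i

end Automaton

def Automaton.ReductsKeepRuns (A : Automaton F ar Q) (R : TRS F ar X) (ℓ : Tm F ar X) : Prop :=
  ∀ (α : X → Q) (q : Q), A.Steps (ℓ.subst (fun x => .var (α x))) (.var q) →
    ∃ t : Tm F ar X, TransGen (RStep R) ℓ t ∧ A.Steps (t.subst (fun x => .var (α x))) (.var q)

section Closure

variable {A : Automaton F ar Q} {R : TRS F ar X}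

theorem exists_reduct_steps_of_subst {ℓ : Tm F ar X} (hℓ : ℓ.Linear)
    (hkeep : A.ReductsKeepRuns R ℓ) {q₀ : Q} (hq₀ : A.Reachable q₀) {σ : X → GTm F ar} {q : Q}
    (hrun : A.Steps (GTm.toTm (ℓ.subst σ)) (.var q)) :
    ∃ s' : GTm F ar, TransGen (RStep R) (ℓ.subst σ) s' ∧ A.Steps s'.toTm (.var q) := by
  classical
  rw [GTm.toTm_subst] at hrun
  obtain ⟨α, hσα, hℓα⟩ := Automaton.exists_states_of_steps_subst hℓ hrun
  obtain ⟨d₀, hd₀⟩ := hq₀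
  let α' : X → Q := fun x => if x ∈ ℓ.varsList then α x else q₀
  let σ' : X → GTm F ar := fun x => if x ∈ ℓ.varsList then σ x else d₀
  have hℓα' : ℓ.subst (fun x => .var (α' x)) = ℓ.subst (fun x => .var (α x)) :=
    Tm.subst_congr ℓ fun x hx => by simp only [α', if_pos hx]
  have hℓσ' : ℓ.subst σ' = ℓ.subst σ := Tm.subst_congr ℓ fun x hx => by simp only [σ', if_pos hx]
  obtain ⟨t, hℓt, htα'⟩ := hkeep α' q (hℓα' ▸ hℓα)
  refine ⟨t.subst σ', hℓσ' ▸ RStep.transGen_subst hℓt σ', ?_⟩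
  rw [GTm.toTm_subst]
  refine (Tm.reflTransGen_subst Automaton.Step.congr (fun x => ?_) t).trans htα'
  show A.Steps _ _
  by_cases hx : x ∈ ℓ.varsList
  · simpa only [σ', α', if_pos hx] using hσα x hx
  · simpa only [σ', α', if_neg hx] using hd₀

theorem exists_reduct_steps_of_rStep (hll : LeftLinear R) (h : ∀ p ∈ R, A.ReductsKeepRuns R p.1)
    {q₀ : Q} (hq₀ : A.Reachable q₀) {s u : GTm F ar} (hsu : RStep R s u) {q : Q}
    (hs : A.Steps s.toTm (.var q)) :
    ∃ s' : GTm F ar, TransGen (RStep R) s s' ∧ A.Steps s'.toTm (.var q) := by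
  induction hsu generalizing q with
  | base hmem => exact exists_reduct_steps_of_subst (hll _ hmem) (h _ hmem) hq₀ hs
  | @congr g ts i t' _ ih =>
    rw [GTm.toTm_node] at hs
    obtain ⟨qs, hqs, hδ⟩ := Automaton.steps_node_var_iff.1 hs
    obtain ⟨si, hsi, hsiq⟩ := ih (hqs i)
    refine ⟨.node g (Function.update ts i si), Tm.transGen_node_update RStep.congr hsi, ?_⟩
    rw [GTm.toTm_node]
    refine Automaton.steps_node_var_iff.2 ⟨qs, fun j => ?_, hδ⟩
    rcases eq_or_ne j i with rfl | hji
    · simpa only [Function.update_self] using hsiq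
    · simpa only [Function.update_of_ne hji] using hqs j

end Closure

end

/-- Criterion for weak closure under rewriting: if whenever `ℓα ⇝* q` some reduct `t` of `ℓ`
satisfies `tα ⇝* q`, then every non-normal-form in `L(A)` has a reduct in `L(A)`. -/
theorem lang_weakly_closed_under_rewriting {F : Type} {ar : F → ℕ} {Q X : Type}
    (A : Automaton F ar Q) (R : TRS F ar X) (hll : LeftLinear R)
    (h : ∀ p ∈ R, ∀ (α : X → Q) (q : Q),
      A.Steps (p.1.subst (fun x => .var (α x))) (.var q) →
      ∃ t : Tm F ar X, Relation.TransGen (RStep R) p.1 t ∧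
        A.Steps (t.subst (fun x => .var (α x))) (.var q)) :
    ∀ s ∈ A.Lang, ¬ IsNF R s →
      ∃ s' : GTm F ar, Relation.TransGen (RStep R) s s' ∧ s' ∈ A.Lang := by
  rintro s ⟨qf, hqf, hrun⟩ hnf
  obtain ⟨u, hsu⟩ : ∃ u, RStep R s u := by simpa [IsNF] using hnf
  obtain ⟨s', hss', hrun'⟩ := exists_reduct_steps_of_rStep hll h ⟨s, hrun⟩ hsu hrun
  exact ⟨s', hss', qf, hqf, hrun'⟩
end

section
/- Let R be a left-linear term rewriting system and A a tree automaton such that L(A) is nonempty, L(A) contains no ground R-normal forms, and L(A) is weakly closed under rewriting with respect to R (every non-normal-form term of L(A) has a reduct, reached in one or more steps, in L(A)). Then R is non-terminating: there exists a ground term admitting an infinite R-rewrite sequence. -/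
/-- Non-termination criterion: if `L(A)` is nonempty, contains no ground `R`-normal forms,
and is weakly closed under rewriting, then `R` admits an infinite rewrite sequence from
a ground term. -/
theorem nontermination {F : Type} {ar : F → ℕ} {Q X : Type}
    (A : Automaton F ar Q) (R : TRS F ar X) (hll : LeftLinear R)
    (hne : A.Lang.Nonempty)
    (hnf : ∀ t ∈ A.Lang, ¬ IsNF R t)
    (hwc : ∀ s ∈ A.Lang, ¬ IsNF R s →
      ∃ t ∈ A.Lang, Relation.TransGen (RStep R) s t) :
    ∃ seq : ℕ → GTm F ar, ∀ n : ℕ, RStep R (seq n) (seq (n + 1)) := by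
  classical
  -- `P t` : from `t` one can reach (in ≥ 0 steps) an element of the language
  set P : GTm F ar → Prop :=
    fun t => ∃ u ∈ A.Lang, Relation.ReflTransGen (RStep R) t u with hP
  have key : ∀ t, P t → ∃ t', RStep R t t' ∧ P t' := by
    intro t ⟨u, hu, hru⟩
    rcases hru.cases_head with h | ⟨c, hc, hcu⟩
    · subst h
      obtain ⟨v, hv, htv⟩ := hwc t hu (hnf t hu)
      rcases Relation.TransGen.head'_iff.mp htv with ⟨c, hc, hcv⟩
      exact ⟨c, hc, v, hv, hcv⟩
    · exact ⟨c, hc, u, hu, hcu⟩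
  choose next hstep hnext using key
  obtain ⟨t0, ht0⟩ := hne
  have hP0 : P t0 := ⟨t0, ht0, Relation.ReflTransGen.refl⟩
  let seq : ℕ → {t : GTm F ar // P t} := fun n =>
    Nat.rec ⟨t0, hP0⟩ (fun _ p => ⟨next p.1 p.2, hnext p.1 p.2⟩) n
  exact ⟨fun n => (seq n).1, fun n => hstep (seq n).1 (seq n).2⟩
end
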